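/- arXiv:2009.12499 — 2 statements merged into one kernel-verified Lean document; each statement's English description precedes it below -/
import Mathlib

section
/- Suppose Ψ = (ψ₁,ψ₂,ψ₃,ψ₄) : [−T_*,T_*] → (ℓ²(ℤ;ℝ))⁴ is C¹ and solves the error equations ψ̇₁ = δ⁺ψ₂ + Res₁, ψ̇₂ = δ⁻[W'(ψ₁;t)] + κψ₃ + Res₂, ψ̇₃ = ψ₄ − ψ₂ + Res₃, μψ̇₄ = −κψ₃ + Res₄, where the residuals satisfy sqrt(‖Res₁‖² + ‖Res₂‖² + ‖Res₃‖² + (1/μ)‖Res₄‖²) ≤ C₀μ^N at each t. Then the modified energy E(t) := Σ_{j∈ℤ}( W_j((ψ₁)_j;t) + (1/2)(ψ₂)_j² + (1/2)κ(ψ₃)_j² + (1/2)μ(ψ₄)_j² ) satisfies, at each t, Ė(t) ≤ (1/2)‖W'(ψ₁;t)‖² + (1/2)‖ψ₂‖² + (κ²/2)‖ψ₃‖² + (μ/2)‖ψ₄‖² + ‖∂_t W(ψ₁;t)‖_{ℓ¹} + (1/2)C₀²μ^{2N}. -/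
/-!
Write the energy as `Φ(R̃, ψ₁) + ½‖ψ₂‖² + ½κ‖ψ₃‖² + ½μ‖ψ₄‖²` with `Φ(r, x) = ∑ⱼ W(rⱼ, xⱼ)`,
where `W(a, b) = V(a + b) - V(a) - V'(a) b` vanishes together with its derivative on the axis
`b = 0`. Since all points `(rⱼ, xⱼ)` of an `ℓ²` pair lie in one compact ball, on which `DW` is
Lipschitz, `W = O(b²)` and `DW = O(b)` uniformly in `j`; hence `Φ` is finite and Fréchet
differentiable on `ℓ² × ℓ²` with termwise derivative, and the chain rule gives `Ė`.
Inserting the error equations, the `κ`-couplings cancel pointwise and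
`⟨W', δ⁺ψ₂⟩ + ⟨ψ₂, δ⁻W'⟩ = 0` by summation by parts, so `Ė` is the drift `⟨∂ₐW, R̃'⟩` plus
pairings of the state with the residuals, and Young's inequality bounds the latter.
-/

noncomputable section

/-- ℓ²(ℤ;ℝ). -/
abbrev L2Z : Type := lp (fun _ : ℤ => ℝ) 2

open Asymptotics Metric

section SquareSummable

variable {ι : Type*}

theorem Summable.mul_of_sq {f g : ι → ℝ} (hf : Summable fun i => f i ^ 2)
    (hg : Summable fun i => g i ^ 2) : Summable fun i => f i * g i :=
  .of_norm_bounded ((hf.add hg).div_const 2) fun i => by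
    rw [Real.norm_eq_abs, abs_mul]
    nlinarith [sq_nonneg (|f i| - |g i|), sq_abs (f i), sq_abs (g i)]

theorem Summable.sq_of_abs_le_mul {f g : ι → ℝ} (hg : Summable fun i => g i ^ 2) {C : ℝ}
    (h : ∀ i, |f i| ≤ C * |g i|) : Summable fun i => f i ^ 2 :=
  .of_nonneg_of_le (fun i => sq_nonneg _) (fun i => by
    rw [← sq_abs, ← sq_abs (g i)]
    nlinarith [h i, abs_nonneg (f i), abs_nonneg (g i)]) (hg.mul_left (C ^ 2))

namespace lp

theorem hasSum_mul (x y : lp (fun _ : ι => ℝ) 2) :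
    HasSum (fun i => x i * y i) (inner ℝ x y) := by
  simpa [mul_comm] using lp.hasSum_inner (𝕜 := ℝ) x y

theorem hasSum_sq (x : lp (fun _ : ι => ℝ) 2) : HasSum (fun i => x i ^ 2) (‖x‖ ^ 2) := by
  simpa [← sq, real_inner_self_eq_norm_sq] using hasSum_mul x x

end lp

end SquareSummable

theorem norm_image_sub_sub_le_of_lipschitzOnWith {E F : Type*} [NormedAddCommGroup E]
    [NormedSpace ℝ E] [NormedAddCommGroup F] [NormedSpace ℝ F] {f : E → F}
    {f' : E → E →L[ℝ] F} {s : Set E} {K : NNReal} (hs : Convex ℝ s)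
    (hf : ∀ x ∈ s, HasFDerivWithinAt f (f' x) s x) (hK : LipschitzOnWith K f' s)
    {x y : E} (hx : x ∈ s) (hy : y ∈ s) :
    ‖f y - f x - f' x (y - x)‖ ≤ K * ‖y - x‖ ^ 2 := by
  have hseg : segment ℝ x y ⊆ s := hs.segment_subset hx hy
  have bound : ∀ z ∈ segment ℝ x y, ‖f' z - f' x‖ ≤ K * ‖y - x‖ := fun z hz => by
    rw [← dist_eq_norm, ← dist_eq_norm']
    calc dist (f' z) (f' x) ≤ K * dist z x := hK.dist_le_mul z (hseg hz) x hx
      _ ≤ K * dist x y := by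
        gcongr
        simpa [dist_comm] using segment_subset_closedBall_left x y hz
  have := (convex_segment x y).norm_image_sub_le_of_norm_hasFDerivWithin_le'
    (fun z hz => (hf z (hseg hz)).mono hseg) bound (left_mem_segment ℝ x y)
    (right_mem_segment ℝ x y)
  rwa [mul_assoc, ← sq] at this

theorem ContDiff.exists_lipschitzOnWith_fderiv {E F : Type*} [NormedAddCommGroup E]
    [NormedSpace ℝ E] [NormedAddCommGroup F] [NormedSpace ℝ F]
    {f : E → F} (hf : ContDiff ℝ 2 f) {s : Set E} (hs : IsCompact s) :
    ∃ K, LipschitzOnWith K (fderiv ℝ f) s :=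
  (hf.fderiv_right (m := 1) le_rfl).locallyLipschitz.locallyLipschitzOn
    |>.exists_lipschitzOnWith_of_compact hs

theorem Prod.norm_sq_le_sq_add_sq (u v : ℝ) : ‖(u, v)‖ ^ 2 ≤ u ^ 2 + v ^ 2 := by
  rw [Prod.norm_def, Real.norm_eq_abs, Real.norm_eq_abs]
  rcases le_total |u| |v| with h | h
  · rw [max_eq_right h, sq_abs]; nlinarith [sq_nonneg u]
  · rw [max_eq_left h, sq_abs]; nlinarith [sq_nonneg v]

section VanishingOnAxis

variable {f : ℝ × ℝ → ℝ} {K : NNReal} {M : ℝ}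

theorem abs_fderiv_apply_le_of_lipschitzOnWith (hdf0 : ∀ a, fderiv ℝ f (a, 0) = 0)
    (hK : LipschitzOnWith K (fderiv ℝ f) (closedBall 0 M)) {a b : ℝ}
    (hab : (a, b) ∈ closedBall (0 : ℝ × ℝ) M) (v : ℝ × ℝ) :
    |fderiv ℝ f (a, b) v| ≤ K * |b| * ‖v‖ := by
  have ha0 : (a, (0 : ℝ)) ∈ closedBall (0 : ℝ × ℝ) M := by
    simp_all [Prod.norm_def]
  have hdist := hK.dist_le_mul _ hab _ ha0
  rw [hdf0, dist_zero_right] at hdist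
  calc |fderiv ℝ f (a, b) v| ≤ ‖fderiv ℝ f (a, b)‖ * ‖v‖ := (fderiv ℝ f (a, b)).le_opNorm v
    _ ≤ K * |b| * ‖v‖ := by
      gcongr
      simpa [Prod.dist_eq] using hdist

theorem abs_le_sq_of_lipschitzOnWith (hf : Differentiable ℝ f) (hf0 : ∀ a, f (a, 0) = 0)
    (hdf0 : ∀ a, fderiv ℝ f (a, 0) = 0)
    (hK : LipschitzOnWith K (fderiv ℝ f) (closedBall 0 M)) {a b : ℝ}
    (hab : (a, b) ∈ closedBall (0 : ℝ × ℝ) M) : |f (a, b)| ≤ K * b ^ 2 := by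
  have ha0 : (a, (0 : ℝ)) ∈ closedBall (0 : ℝ × ℝ) M := by
    simp_all [Prod.norm_def]
  have := norm_image_sub_sub_le_of_lipschitzOnWith (convex_closedBall _ _)
    (fun x _ => (hf x).hasFDerivAt.hasFDerivWithinAt) hK ha0 hab
  simpa [hf0, hdf0, Prod.norm_def] using this

end VanishingOnAxis

section Nemytskii

variable {ι : Type*} {f : ℝ × ℝ → ℝ}

local notation "ℓ²" => lp (fun _ : ι => ℝ) 2

theorem norm_prodMk_apply_le (p : ℓ² × ℓ²) (i : ι) : ‖(p.1 i, p.2 i)‖ ≤ ‖p‖ := by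
  simp only [Prod.norm_def]
  exact max_le_max (lp.norm_apply_le_norm two_ne_zero _ i) (lp.norm_apply_le_norm two_ne_zero _ i)

theorem summable_sq_fderiv_comp_prodMk (hf : ContDiff ℝ 2 f) (hdf0 : ∀ a, fderiv ℝ f (a, 0) = 0)
    (p : ℓ² × ℓ²) (v : ℝ × ℝ) :
    Summable fun i => fderiv ℝ f (p.1 i, p.2 i) v ^ 2 := by
  obtain ⟨K, hK⟩ := hf.exists_lipschitzOnWith_fderiv (isCompact_closedBall (0 : ℝ × ℝ) ‖p‖)
  refine (lp.hasSum_sq p.2).summable.sq_of_abs_le_mul (C := K * ‖v‖) fun i => ?_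
  have := abs_fderiv_apply_le_of_lipschitzOnWith hdf0 hK
    (mem_closedBall_zero_iff.2 (norm_prodMk_apply_le p i)) v
  linarith

theorem summable_comp_prodMk (hf : ContDiff ℝ 2 f) (hf0 : ∀ a, f (a, 0) = 0)
    (hdf0 : ∀ a, fderiv ℝ f (a, 0) = 0) (p : ℓ² × ℓ²) :
    Summable fun i => f (p.1 i, p.2 i) := by
  obtain ⟨K, hK⟩ := hf.exists_lipschitzOnWith_fderiv (isCompact_closedBall (0 : ℝ × ℝ) ‖p‖)
  exact .of_norm_bounded ((lp.hasSum_sq p.2).summable.mul_left (K : ℝ)) fun i =>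
    abs_le_sq_of_lipschitzOnWith (hf.differentiable two_ne_zero) hf0 hdf0 hK
      (mem_closedBall_zero_iff.2 (norm_prodMk_apply_le p i))

theorem memℓp_fderiv_comp_prodMk (hf : ContDiff ℝ 2 f) (hdf0 : ∀ a, fderiv ℝ f (a, 0) = 0)
    (p : ℓ² × ℓ²) (v : ℝ × ℝ) :
    Memℓp (fun i => fderiv ℝ f (p.1 i, p.2 i) v) 2 :=
  (memℓp_gen_iff (by norm_num)).2 (by simpa using summable_sq_fderiv_comp_prodMk hf hdf0 p v)

theorem exists_hasSum_fderiv_comp_prodMk (hf : ContDiff ℝ 2 f) (hdf0 : ∀ a, fderiv ℝ f (a, 0) = 0)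
    (p : ℓ² × ℓ²) : ∃ D : ℓ² × ℓ² →L[ℝ] ℝ,
    ∀ h : ℓ² × ℓ², HasSum (fun i => fderiv ℝ f (p.1 i, p.2 i) (h.1 i, h.2 i)) (D h) := by
  let c : ℓ² := ⟨_, memℓp_fderiv_comp_prodMk hf hdf0 p (1, 0)⟩
  let a : ℓ² := ⟨_, memℓp_fderiv_comp_prodMk hf hdf0 p (0, 1)⟩
  refine ⟨(innerSL ℝ c).comp (.fst ℝ ℓ² ℓ²) + (innerSL ℝ a).comp (.snd ℝ ℓ² ℓ²), fun h => ?_⟩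
  convert (lp.hasSum_mul c h.1).add (lp.hasSum_mul a h.2) using 1
  funext i
  have hsplit : (h.1 i, h.2 i) = h.1 i • ((1 : ℝ), (0 : ℝ)) + h.2 i • ((0 : ℝ), (1 : ℝ)) := by
    ext <;> simp
  rw [hsplit, map_add, map_smul, map_smul, smul_eq_mul, smul_eq_mul, mul_comm, mul_comm (h.2 i)]
  rfl

theorem hasFDerivAt_tsum_comp_prodMk (hf : ContDiff ℝ 2 f) (hf0 : ∀ a, f (a, 0) = 0)
    (hdf0 : ∀ a, fderiv ℝ f (a, 0) = 0) (p : ℓ² × ℓ²) :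
    ∃ D : ℓ² × ℓ² →L[ℝ] ℝ, HasFDerivAt (fun q : ℓ² × ℓ² => ∑' i, f (q.1 i, q.2 i)) D p ∧
      ∀ h : ℓ² × ℓ², HasSum (fun i => fderiv ℝ f (p.1 i, p.2 i) (h.1 i, h.2 i)) (D h) := by
  obtain ⟨D, hD⟩ := exists_hasSum_fderiv_comp_prodMk hf hdf0 p
  refine ⟨D, ?_, hD⟩
  obtain ⟨K, hK⟩ := hf.exists_lipschitzOnWith_fderiv (isCompact_closedBall (0 : ℝ × ℝ) (‖p‖ + 1))
  have hmem : ∀ q : ℓ² × ℓ², ‖q‖ ≤ ‖p‖ + 1 → ∀ i, (q.1 i, q.2 i) ∈ closedBall (0 : ℝ × ℝ) (‖p‖ + 1) :=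
    fun q hq i => mem_closedBall_zero_iff.2 ((norm_prodMk_apply_le q i).trans hq)
  rw [hasFDerivAt_iff_isLittleO_nhds_zero]
  refine IsBigO.trans_isLittleO (g := fun h => ‖h‖ ^ 2) ?_ (isLittleO_norm_pow_id one_lt_two)
  refine IsBigO.of_bound (2 * K) ?_
  filter_upwards [ball_mem_nhds (0 : ℓ² × ℓ²) one_pos] with h hh
  rw [mem_ball_zero_iff] at hh
  have hsum := (((summable_comp_prodMk hf hf0 hdf0 (p + h)).hasSum.sub
    (summable_comp_prodMk hf hf0 hdf0 p).hasSum).sub (hD h))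
  have hbound := ((lp.hasSum_sq h.1).add (lp.hasSum_sq h.2)).mul_left (K : ℝ)
  refine (hsum.norm_le_of_bounded hbound fun i => ?_).trans ?_
  · have := norm_image_sub_sub_le_of_lipschitzOnWith (convex_closedBall _ _)
      (fun x _ => (hf.differentiable two_ne_zero x).hasFDerivAt.hasFDerivWithinAt) hK
      (hmem p (by linarith) i) (hmem (p + h) ((norm_add_le p h).trans (by linarith)) i)
    have hdiff : ((p + h).1 i, (p + h).2 i) - (p.1 i, p.2 i) = (h.1 i, h.2 i) := by
      ext <;> simp
    rw [hdiff] at this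
    exact this.trans (mul_le_mul_of_nonneg_left (Prod.norm_sq_le_sq_add_sq _ _) K.2)
  · rw [norm_pow, norm_norm]
    calc (K : ℝ) * (‖h.1‖ ^ 2 + ‖h.2‖ ^ 2) ≤ K * (‖h‖ ^ 2 + ‖h‖ ^ 2) := by
          gcongr
          exacts [norm_fst_le h, norm_snd_le h]
      _ = 2 * K * ‖h‖ ^ 2 := by ring

theorem hasDerivWithinAt_tsum_comp_prodMk (hf : ContDiff ℝ 2 f) (hf0 : ∀ a, f (a, 0) = 0)
    (hdf0 : ∀ a, fderiv ℝ f (a, 0) = 0) {r x : ℝ → ℓ²} {r' x' : ℓ²} {S : Set ℝ} {t : ℝ}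
    (hr : HasDerivWithinAt r r' S t) (hx : HasDerivWithinAt x x' S t) :
    HasDerivWithinAt (fun s => ∑' i, f (r s i, x s i))
      (∑' i, fderiv ℝ f (r t i, x t i) (r' i, x' i)) S t := by
  obtain ⟨D, hD, hDsum⟩ := hasFDerivAt_tsum_comp_prodMk hf hf0 hdf0 (r t, x t)
  rw [(hDsum (r', x')).tsum_eq]
  exact hD.comp_hasDerivWithinAt t (hr.prodMk hx)

end Nemytskii

section Bregman

/- `bregman V (a, b)` is the Bregman divergence `D_V(a + b, a)`: the paper's `W_j(ζ; t)` is
`bregman V (R̃_j(t), ζ)`, its `W'_j` is `bregmanDerivSnd`, and `∂ₜW_j = bregmanDerivFst · R̃'_j`. -/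

def bregman (V : ℝ → ℝ) (p : ℝ × ℝ) : ℝ := V (p.1 + p.2) - V p.1 - deriv V p.1 * p.2

def bregmanDerivFst (V : ℝ → ℝ) (p : ℝ × ℝ) : ℝ :=
  deriv V (p.1 + p.2) - deriv V p.1 - deriv (deriv V) p.1 * p.2

def bregmanDerivSnd (V : ℝ → ℝ) (p : ℝ × ℝ) : ℝ := deriv V (p.1 + p.2) - deriv V p.1

variable {V : ℝ → ℝ}

theorem bregman_zero (a : ℝ) : bregman V (a, 0) = 0 := by
  simp [bregman]

theorem contDiff_bregman {n : WithTop ℕ∞} (hV : ContDiff ℝ (n + 1) V) :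
    ContDiff ℝ n (bregman V) :=
  ((hV.comp (contDiff_fst.add contDiff_snd)).sub (hV.comp contDiff_fst)).of_le le_self_add |>.sub
    ((hV.deriv'.comp contDiff_fst).mul contDiff_snd)

theorem hasFDerivAt_bregman (hV : ContDiff ℝ 2 V) (p : ℝ × ℝ) :
    HasFDerivAt (bregman V) (bregmanDerivFst V p • ContinuousLinearMap.fst ℝ ℝ ℝ
      + bregmanDerivSnd V p • ContinuousLinearMap.snd ℝ ℝ ℝ) p := by
  have hd : ∀ x, HasDerivAt V (deriv V x) x := fun x =>
    (hV.differentiable two_ne_zero x).hasDerivAt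
  have hd' : HasDerivAt (deriv V) (deriv (deriv V) p.1) p.1 :=
    ((hV.deriv' (n := 1)).differentiable one_ne_zero p.1).hasDerivAt
  have hd'fst : HasFDerivAt (fun q : ℝ × ℝ => deriv V q.1)
      (deriv (deriv V) p.1 • ContinuousLinearMap.fst ℝ ℝ ℝ) p :=
    HasDerivAt.comp_hasFDerivAt (f := Prod.fst) p hd' hasFDerivAt_fst
  have := (((hd (p.1 + p.2)).comp_hasFDerivAt p (hasFDerivAt_fst.add hasFDerivAt_snd)).sub
    ((hd p.1).comp_hasFDerivAt p hasFDerivAt_fst)).sub (hd'fst.mul hasFDerivAt_snd)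
  refine this.congr_fderiv ?_
  ext <;> simp [bregmanDerivFst, bregmanDerivSnd]
  ring

theorem fderiv_bregman_apply (hV : ContDiff ℝ 2 V) (p v : ℝ × ℝ) :
    fderiv ℝ (bregman V) p v = bregmanDerivFst V p * v.1 + bregmanDerivSnd V p * v.2 := by
  simp [(hasFDerivAt_bregman hV p).fderiv]

theorem fderiv_bregman_zero (hV : ContDiff ℝ 2 V) (a : ℝ) : fderiv ℝ (bregman V) (a, 0) = 0 := by
  ext <;> simp [fderiv_bregman_apply hV, bregmanDerivFst, bregmanDerivSnd]

end Bregman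

section Energy

variable {ι : Type*} {V : ℝ → ℝ}

local notation "ℓ²" => lp (fun _ : ι => ℝ) 2

theorem summable_sq_bregmanDerivFst (hV : ContDiff ℝ 3 V) (r x : ℓ²) :
    Summable fun i => bregmanDerivFst V (r i, x i) ^ 2 := by
  simpa [fderiv_bregman_apply (hV.of_le (by norm_num))] using
    summable_sq_fderiv_comp_prodMk (contDiff_bregman hV) (fderiv_bregman_zero (hV.of_le (by norm_num)))
      (r, x) (1, 0)

theorem summable_sq_bregmanDerivSnd (hV : ContDiff ℝ 3 V) (r x : ℓ²) :
    Summable fun i => bregmanDerivSnd V (r i, x i) ^ 2 := by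
  simpa [fderiv_bregman_apply (hV.of_le (by norm_num))] using
    summable_sq_fderiv_comp_prodMk (contDiff_bregman hV) (fderiv_bregman_zero (hV.of_le (by norm_num)))
      (r, x) (0, 1)

theorem hasDerivWithinAt_modifiedEnergy (hV : ContDiff ℝ 3 V) (κ μ : ℝ) {S : Set ℝ} {t : ℝ}
    {r ψ₁ ψ₂ ψ₃ ψ₄ : ℝ → ℓ²} {r' d₁ d₂ d₃ d₄ : ℓ²} (hr : HasDerivWithinAt r r' S t)
    (h₁ : HasDerivWithinAt ψ₁ d₁ S t) (h₂ : HasDerivWithinAt ψ₂ d₂ S t)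
    (h₃ : HasDerivWithinAt ψ₃ d₃ S t) (h₄ : HasDerivWithinAt ψ₄ d₄ S t) :
    HasDerivWithinAt (fun s => ∑' j, (bregman V (r s j, ψ₁ s j) + 1 / 2 * ψ₂ s j ^ 2
        + 1 / 2 * κ * ψ₃ s j ^ 2 + 1 / 2 * μ * ψ₄ s j ^ 2))
      ((∑' j, bregmanDerivFst V (r t j, ψ₁ t j) * r' j)
        + ((∑' j, bregmanDerivSnd V (r t j, ψ₁ t j) * d₁ j) + inner ℝ (ψ₂ t) d₂
          + κ * inner ℝ (ψ₃ t) d₃ + μ * inner ℝ (ψ₄ t) d₄)) S t := by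
  have hV2 : ContDiff ℝ 2 V := hV.of_le (by norm_num)
  have hB := hasDerivWithinAt_tsum_comp_prodMk (contDiff_bregman hV) bregman_zero
    (fderiv_bregman_zero hV2) hr h₁
  have h := ((hB.add (h₂.norm_sq.const_mul (1 / 2))).add (h₃.norm_sq.const_mul (1 / 2 * κ))).add
    (h₄.norm_sq.const_mul (1 / 2 * μ))
  have hE : (fun s => ∑' j, (bregman V (r s j, ψ₁ s j) + 1 / 2 * ψ₂ s j ^ 2
      + 1 / 2 * κ * ψ₃ s j ^ 2 + 1 / 2 * μ * ψ₄ s j ^ 2)) = fun s => (∑' j, bregman V (r s j, ψ₁ s j))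
      + 1 / 2 * ‖ψ₂ s‖ ^ 2 + 1 / 2 * κ * ‖ψ₃ s‖ ^ 2 + 1 / 2 * μ * ‖ψ₄ s‖ ^ 2 := funext fun s =>
    ((((summable_comp_prodMk (contDiff_bregman hV) bregman_zero (fderiv_bregman_zero hV2)
      (r s, ψ₁ s)).hasSum.add ((lp.hasSum_sq (ψ₂ s)).mul_left (1 / 2))).add
      ((lp.hasSum_sq (ψ₃ s)).mul_left (1 / 2 * κ))).add
      ((lp.hasSum_sq (ψ₄ s)).mul_left (1 / 2 * μ))).tsum_eq
  have hsplit := ((summable_sq_bregmanDerivFst hV (r t) (ψ₁ t)).mul_of_sq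
    (lp.hasSum_sq r').summable).hasSum.add ((summable_sq_bregmanDerivSnd hV (r t) (ψ₁ t)).mul_of_sq
    (lp.hasSum_sq d₁).summable).hasSum
  rw [hE]
  refine h.congr_deriv ?_
  simp only [fderiv_bregman_apply hV2, hsplit.tsum_eq]
  ring

end Energy

section Lattice

theorem hasSum_sub_shift_zero {g : ℤ → ℝ} (hg : Summable g) :
    HasSum (fun j => g (j + 1) - g j) 0 := by
  have h := (Equiv.addRight (1 : ℤ)).hasSum_iff.2 hg.hasSum
  simpa using h.sub hg.hasSum

theorem mul_le_half_mul_sq_add {ε : ℝ} (hε : 0 < ε) (x y : ℝ) :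
    x * y ≤ ε / 2 * x ^ 2 + 1 / (2 * ε) * y ^ 2 := by
  have h : 0 ≤ (ε * x - y) ^ 2 / (2 * ε) := by positivity
  have expand : (ε * x - y) ^ 2 / (2 * ε) = ε / 2 * x ^ 2 + 1 / (2 * ε) * y ^ 2 - x * y := by
    field_simp
    ring
  linarith

variable {a : ℤ → ℝ} {κ μ : ℝ} {ψ₂ ψ₃ ψ₄ d₁ d₂ d₃ d₄ ρ₁ ρ₂ ρ₃ ρ₄ : L2Z}

theorem hasSum_energyFlux (ha : Summable fun j => a j ^ 2)
    (h₁ : ∀ j, d₁ j = ψ₂ (j + 1) - ψ₂ j + ρ₁ j)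
    (h₂ : ∀ j, d₂ j = a j - a (j - 1) + κ * ψ₃ j + ρ₂ j)
    (h₃ : ∀ j, d₃ j = ψ₄ j - ψ₂ j + ρ₃ j)
    (h₄ : ∀ j, μ * d₄ j = -(κ * ψ₃ j) + ρ₄ j) :
    HasSum (fun j => a j * ρ₁ j + ψ₂ j * ρ₂ j + κ * ψ₃ j * ρ₃ j + ψ₄ j * ρ₄ j)
      ((∑' j, a j * d₁ j) + inner ℝ ψ₂ d₂ + κ * inner ℝ ψ₃ d₃ + μ * inner ℝ ψ₄ d₄) := by
  have hL := (((ha.mul_of_sq (lp.hasSum_sq d₁).summable).hasSum.add (lp.hasSum_mul ψ₂ d₂)).add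
    ((lp.hasSum_mul ψ₃ d₃).mul_left κ)).add ((lp.hasSum_mul ψ₄ d₄).mul_left μ)
  have hT := hasSum_sub_shift_zero
    (((Equiv.subRight (1 : ℤ)).summable_iff.2 ha).mul_of_sq (lp.hasSum_sq ψ₂).summable)
  -- pointwise, the flux minus the residual pairing is the telescoping term of `hT`
  have hpt : (fun j => a j * ρ₁ j + ψ₂ j * ρ₂ j + κ * ψ₃ j * ρ₃ j + ψ₄ j * ρ₄ j) = fun j =>
      (a j * d₁ j + ψ₂ j * d₂ j + κ * (ψ₃ j * d₃ j) + μ * (ψ₄ j * d₄ j))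
        - (a (j + 1 - 1) * ψ₂ (j + 1) - a (j - 1) * ψ₂ j) := funext fun j => by
    rw [h₁, h₂, h₃, add_sub_cancel_right]
    linear_combination -(ψ₄ j * h₄ j)
  rw [hpt, ← sub_zero (∑' j, _ + _ + _ + _)]
  exact hL.sub hT

theorem energyFlux_le (ha : Summable fun j => a j ^ 2) (hμ : 0 < μ)
    (h₁ : ∀ j, d₁ j = ψ₂ (j + 1) - ψ₂ j + ρ₁ j)
    (h₂ : ∀ j, d₂ j = a j - a (j - 1) + κ * ψ₃ j + ρ₂ j)
    (h₃ : ∀ j, d₃ j = ψ₄ j - ψ₂ j + ρ₃ j)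
    (h₄ : ∀ j, μ * d₄ j = -(κ * ψ₃ j) + ρ₄ j) :
    (∑' j, a j * d₁ j) + inner ℝ ψ₂ d₂ + κ * inner ℝ ψ₃ d₃ + μ * inner ℝ ψ₄ d₄
      ≤ 1 / 2 * (∑' j, a j ^ 2) + 1 / 2 * ‖ψ₂‖ ^ 2 + κ ^ 2 / 2 * ‖ψ₃‖ ^ 2 + μ / 2 * ‖ψ₄‖ ^ 2
        + 1 / 2 * (‖ρ₁‖ ^ 2 + ‖ρ₂‖ ^ 2 + ‖ρ₃‖ ^ 2 + 1 / μ * ‖ρ₄‖ ^ 2) := by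
  have hR := ((((ha.hasSum.mul_left (1 / 2)).add ((lp.hasSum_sq ψ₂).mul_left (1 / 2))).add
    ((lp.hasSum_sq ψ₃).mul_left (κ ^ 2 / 2))).add ((lp.hasSum_sq ψ₄).mul_left (μ / 2))).add
    (((((lp.hasSum_sq ρ₁).add (lp.hasSum_sq ρ₂)).add (lp.hasSum_sq ρ₃)).add
      ((lp.hasSum_sq ρ₄).mul_left (1 / μ))).mul_left (1 / 2))
  refine hasSum_le (fun j => ?_) (hasSum_energyFlux ha h₁ h₂ h₃ h₄) hR
  have y₁ := mul_le_half_mul_sq_add one_pos (a j) (ρ₁ j)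
  have y₂ := mul_le_half_mul_sq_add one_pos (ψ₂ j) (ρ₂ j)
  have y₃ := mul_le_half_mul_sq_add one_pos (κ * ψ₃ j) (ρ₃ j)
  have y₄ := mul_le_half_mul_sq_add hμ (ψ₄ j) (ρ₄ j)
  have hμ' : 1 / (2 * μ) = 1 / 2 * (1 / μ) := by field_simp
  rw [hμ'] at y₄
  linarith

end Lattice

theorem modified_energy_estimate_general
    (V : ℝ → ℝ) (hV : ContDiff ℝ (⊤ : ℕ∞) V)
    (κ μ C₀ N T : ℝ) (hμ : 0 < μ)
    -- the C¹ reference curve R̃ and its derivative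
    (Rt Rt' : ℝ → L2Z)
    (hdRt : ∀ t ∈ Set.Icc (-T) T, HasDerivWithinAt Rt (Rt' t) (Set.Icc (-T) T) t)
    -- the C¹ error curve Ψ, its derivatives, and the residuals
    (ψ₁ ψ₂ ψ₃ ψ₄ dψ₁ dψ₂ dψ₃ dψ₄ Res₁ Res₂ Res₃ Res₄ : ℝ → L2Z)
    (hd₁ : ∀ t ∈ Set.Icc (-T) T, HasDerivWithinAt ψ₁ (dψ₁ t) (Set.Icc (-T) T) t)
    (hd₂ : ∀ t ∈ Set.Icc (-T) T, HasDerivWithinAt ψ₂ (dψ₂ t) (Set.Icc (-T) T) t)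
    (hd₃ : ∀ t ∈ Set.Icc (-T) T, HasDerivWithinAt ψ₃ (dψ₃ t) (Set.Icc (-T) T) t)
    (hd₄ : ∀ t ∈ Set.Icc (-T) T, HasDerivWithinAt ψ₄ (dψ₄ t) (Set.Icc (-T) T) t)
    -- the error equations, componentwise
    (heq₁ : ∀ t ∈ Set.Icc (-T) T, ∀ j : ℤ,
      dψ₁ t j = (ψ₂ t (j + 1) - ψ₂ t j) + Res₁ t j)
    (heq₂ : ∀ t ∈ Set.Icc (-T) T, ∀ j : ℤ,
      dψ₂ t j = ((deriv V (Rt t j + ψ₁ t j) - deriv V (Rt t j))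
          - (deriv V (Rt t (j - 1) + ψ₁ t (j - 1)) - deriv V (Rt t (j - 1))))
        + κ * ψ₃ t j + Res₂ t j)
    (heq₃ : ∀ t ∈ Set.Icc (-T) T, ∀ j : ℤ,
      dψ₃ t j = ψ₄ t j - ψ₂ t j + Res₃ t j)
    (heq₄ : ∀ t ∈ Set.Icc (-T) T, ∀ j : ℤ,
      μ * dψ₄ t j = -(κ * ψ₃ t j) + Res₄ t j)
    -- the residuals are small
    (hres : ∀ t ∈ Set.Icc (-T) T,
      Real.sqrt (‖Res₁ t‖ ^ 2 + ‖Res₂ t‖ ^ 2 + ‖Res₃ t‖ ^ 2 + (1 / μ) * ‖Res₄ t‖ ^ 2) ≤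
        C₀ * μ ^ N) :
    ∀ t ∈ Set.Icc (-T) T, ∃ E' : ℝ,
      HasDerivWithinAt (fun s : ℝ => ∑' j : ℤ,
          ((V (Rt s j + ψ₁ s j) - V (Rt s j) - deriv V (Rt s j) * ψ₁ s j)
            + 1 / 2 * (ψ₂ s j) ^ 2 + 1 / 2 * κ * (ψ₃ s j) ^ 2 + 1 / 2 * μ * (ψ₄ s j) ^ 2))
        E' (Set.Icc (-T) T) t ∧
      E' ≤ 1 / 2 * (∑' j : ℤ, (deriv V (Rt t j + ψ₁ t j) - deriv V (Rt t j)) ^ 2)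
        + 1 / 2 * ‖ψ₂ t‖ ^ 2 + κ ^ 2 / 2 * ‖ψ₃ t‖ ^ 2 + μ / 2 * ‖ψ₄ t‖ ^ 2
        + (∑' j : ℤ, |(deriv V (Rt t j + ψ₁ t j) - deriv V (Rt t j)
            - deriv (deriv V) (Rt t j) * ψ₁ t j) * Rt' t j|)
        + 1 / 2 * C₀ ^ 2 * μ ^ (2 * N) := by
  intro t ht
  have hV3 : ContDiff ℝ 3 V := hV.of_le (by norm_cast)
  refine ⟨_, hasDerivWithinAt_modifiedEnergy hV3 κ μ (hdRt t ht) (hd₁ t ht) (hd₂ t ht) (hd₃ t ht)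
    (hd₄ t ht), ?_⟩
  have hflux := energyFlux_le (summable_sq_bregmanDerivSnd hV3 (Rt t) (ψ₁ t)) hμ (heq₁ t ht)
    (heq₂ t ht) (heq₃ t ht) (heq₄ t ht)
  have hdrift : ∑' j, bregmanDerivFst V (Rt t j, ψ₁ t j) * Rt' t j
      ≤ ∑' j, |bregmanDerivFst V (Rt t j, ψ₁ t j) * Rt' t j| := by
    have hs := (summable_sq_bregmanDerivFst hV3 (Rt t) (ψ₁ t)).mul_of_sq
      (lp.hasSum_sq (Rt' t)).summable
    exact hs.tsum_le_tsum (fun j => le_abs_self _) hs.abs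
  have hsmall : ‖Res₁ t‖ ^ 2 + ‖Res₂ t‖ ^ 2 + ‖Res₃ t‖ ^ 2 + 1 / μ * ‖Res₄ t‖ ^ 2
      ≤ C₀ ^ 2 * μ ^ (2 * N) := by
    rw [mul_comm 2 N, Real.rpow_mul hμ.le, Real.rpow_two, ← mul_pow]
    exact (Real.sqrt_le_iff.1 (hres t ht)).2
  simp only [bregmanDerivFst, bregmanDerivSnd] at hflux hdrift ⊢
  linarith

/-- The key energy estimate: if `Ψ = (ψ₁,ψ₂,ψ₃,ψ₄)` is a C¹ curve in `(ℓ²)⁴` solving the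
error equations
`ψ̇₁ = δ⁺ψ₂ + Res₁`, `ψ̇₂ = δ⁻[W'(ψ₁;t)] + κψ₃ + Res₂`, `ψ̇₃ = ψ₄ − ψ₂ + Res₃`,
`μψ̇₄ = −κψ₃ + Res₄`, with residuals satisfying
`sqrt(‖Res₁‖² + ‖Res₂‖² + ‖Res₃‖² + (1/μ)‖Res₄‖²) ≤ C₀μ^N`, then the modified energy
`E(t) = Σ_j ( W_j((ψ₁)_j;t) + ½(ψ₂)_j² + ½κ(ψ₃)_j² + ½μ(ψ₄)_j² )` satisfies
`Ė ≤ ½‖W'(ψ₁;t)‖² + ½‖ψ₂‖² + (κ²/2)‖ψ₃‖² + (μ/2)‖ψ₄‖² + ‖∂ₜW(ψ₁;t)‖_{ℓ¹} + ½C₀²μ^{2N}`.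
Here `W_j(ζ;t) := V(R̃_j(t)+ζ) − V(R̃_j(t)) − V'(R̃_j(t))ζ` and
`W'_j(ζ;t) := V'(R̃_j(t)+ζ) − V'(R̃_j(t))`. -/
theorem modified_energy_estimate
    (V : ℝ → ℝ) (hV : ContDiff ℝ (⊤ : ℕ∞) V)
    (k : ℝ) (hkdef : k = deriv (deriv V) 0) (hk : 0 < k)
    (κ μ C₀ N T : ℝ) (hκ : 0 < κ) (hμ : 0 < μ) (hC₀ : 0 < C₀) (hN : 0 < N) (hT : 0 < T)
    -- the C¹ reference curve R̃ and its derivative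
    (Rt Rt' : ℝ → L2Z)
    (hdRt : ∀ t ∈ Set.Icc (-T) T, HasDerivWithinAt Rt (Rt' t) (Set.Icc (-T) T) t)
    -- the C¹ error curve Ψ, its derivatives, and the residuals
    (ψ₁ ψ₂ ψ₃ ψ₄ dψ₁ dψ₂ dψ₃ dψ₄ Res₁ Res₂ Res₃ Res₄ : ℝ → L2Z)
    (hd₁ : ∀ t ∈ Set.Icc (-T) T, HasDerivWithinAt ψ₁ (dψ₁ t) (Set.Icc (-T) T) t)
    (hd₂ : ∀ t ∈ Set.Icc (-T) T, HasDerivWithinAt ψ₂ (dψ₂ t) (Set.Icc (-T) T) t)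
    (hd₃ : ∀ t ∈ Set.Icc (-T) T, HasDerivWithinAt ψ₃ (dψ₃ t) (Set.Icc (-T) T) t)
    (hd₄ : ∀ t ∈ Set.Icc (-T) T, HasDerivWithinAt ψ₄ (dψ₄ t) (Set.Icc (-T) T) t)
    -- the error equations, componentwise
    (heq₁ : ∀ t ∈ Set.Icc (-T) T, ∀ j : ℤ,
      dψ₁ t j = (ψ₂ t (j + 1) - ψ₂ t j) + Res₁ t j)
    (heq₂ : ∀ t ∈ Set.Icc (-T) T, ∀ j : ℤ,
      dψ₂ t j = ((deriv V (Rt t j + ψ₁ t j) - deriv V (Rt t j))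
          - (deriv V (Rt t (j - 1) + ψ₁ t (j - 1)) - deriv V (Rt t (j - 1))))
        + κ * ψ₃ t j + Res₂ t j)
    (heq₃ : ∀ t ∈ Set.Icc (-T) T, ∀ j : ℤ,
      dψ₃ t j = ψ₄ t j - ψ₂ t j + Res₃ t j)
    (heq₄ : ∀ t ∈ Set.Icc (-T) T, ∀ j : ℤ,
      μ * dψ₄ t j = -(κ * ψ₃ t j) + Res₄ t j)
    -- the residuals are small
    (hres : ∀ t ∈ Set.Icc (-T) T,
      Real.sqrt (‖Res₁ t‖ ^ 2 + ‖Res₂ t‖ ^ 2 + ‖Res₃ t‖ ^ 2 + (1 / μ) * ‖Res₄ t‖ ^ 2) ≤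
        C₀ * μ ^ N) :
    ∀ t ∈ Set.Icc (-T) T, ∃ E' : ℝ,
      HasDerivWithinAt (fun s : ℝ => ∑' j : ℤ,
          ((V (Rt s j + ψ₁ s j) - V (Rt s j) - deriv V (Rt s j) * ψ₁ s j)
            + 1 / 2 * (ψ₂ s j) ^ 2 + 1 / 2 * κ * (ψ₃ s j) ^ 2 + 1 / 2 * μ * (ψ₄ s j) ^ 2))
        E' (Set.Icc (-T) T) t ∧
      E' ≤ 1 / 2 * (∑' j : ℤ, (deriv V (Rt t j + ψ₁ t j) - deriv V (Rt t j)) ^ 2)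
        + 1 / 2 * ‖ψ₂ t‖ ^ 2 + κ ^ 2 / 2 * ‖ψ₃ t‖ ^ 2 + μ / 2 * ‖ψ₄ t‖ ^ 2
        + (∑' j : ℤ, |(deriv V (Rt t j + ψ₁ t j) - deriv V (Rt t j)
            - deriv (deriv V) (Rt t j) * ψ₁ t j) * Rt' t j|)
        + 1 / 2 * C₀ ^ 2 * μ ^ (2 * N) :=
  modified_energy_estimate_general V hV κ μ C₀ N T hμ Rt Rt' hdRt ψ₁ ψ₂ ψ₃ ψ₄ dψ₁ dψ₂ dψ₃ dψ₄ Res₁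
    Res₂ Res₃ Res₄ hd₁ hd₂ hd₃ hd₄ heq₁ heq₂ heq₃ heq₄ hres
end
end

section
/- Suppose f : ℝ → ℂ is C^{n+1} and ω ≠ 0 is real. Then for all t ∈ ℝ: ∫₀ᵗ e^{iω(t−t')} f(t') dt' = (i/ω) Σ_{j=0}^{n} (−i/ω)^j f^{(j)}(t) − (i e^{iωt}/ω) Σ_{j=0}^{n} (−i/ω)^j f^{(j)}(0) + (−i/ω)^{n+1} ∫₀ᵗ e^{iω(t−t')} f^{(n+1)}(t') dt'. -/
/-!
Integrate by parts against `s ↦ (i/ω) e^{iω(t-s)}`, an antiderivative of the kernel in `s`, and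
repeat on `f, f', …, f^{(n)}`. The induction starts from `n = 0` derivatives, where the formula is
the identity.
-/

open Complex intervalIntegral Finset MeasureTheory

variable {ω : ℝ}

theorem hasDerivAt_I_div_mul_cexp (hω : ω ≠ 0) (t s : ℝ) :
    HasDerivAt (fun s : ℝ => I / ω * exp (I * ω * (t - s))) (exp (I * ω * (t - s))) s := by
  have hω' : (ω : ℂ) ≠ 0 := ofReal_ne_zero.mpr hω
  have h : HasDerivAt (fun s : ℝ => I / ω * exp (I * ω * (t - s)))
      (I / ω * (exp (I * ω * (t - s)) * (I * ω * -1))) s := by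
    simpa using
      ((((hasDerivAt_id s).ofReal_comp).const_sub (t : ℂ)).const_mul (I * ω)).cexp.const_mul (I / ω)
  have hI : I / ω * (I * ω * -1) = 1 := by field_simp; simp
  convert h using 1
  linear_combination (-exp (I * ω * (t - s))) * hI

theorem integral_cexp_mul_eq_of_hasDerivAt (hω : ω ≠ 0) {g g' : ℝ → ℂ} {t : ℝ}
    (hg : ∀ s ∈ Set.uIcc 0 t, HasDerivAt g (g' s) s) (hg' : IntervalIntegrable g' volume 0 t) :
    ∫ s in 0..t, exp (I * ω * (t - s)) * g s =
      I / ω * g t - I * exp (I * ω * t) / ω * g 0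
        + -I / ω * ∫ s in 0..t, exp (I * ω * (t - s)) * g' s := by
  have hexp : Continuous fun s : ℝ => exp (I * ω * (t - s)) := by fun_prop
  have parts := integral_mul_deriv_eq_deriv_mul hg (fun s _ => hasDerivAt_I_div_mul_cexp hω t s)
    hg' (hexp.intervalIntegrable 0 t)
  simp only [ofReal_zero, sub_zero, sub_self, mul_zero, exp_zero, mul_one, mul_left_comm (g' _),
    intervalIntegral.integral_const_mul] at parts
  simp_rw [mul_comm (exp _)]
  rw [parts]
  ring

theorem integral_cexp_mul_eq_sum_iteratedDeriv (hω : ω ≠ 0) {f : ℝ → ℂ} (n : ℕ)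
    (hf : ContDiff ℝ n f) (t : ℝ) :
    ∫ s in 0..t, exp (I * ω * (t - s)) * f s =
      I / ω * ∑ j ∈ range n, (-I / ω) ^ j * iteratedDeriv j f t
        - I * exp (I * ω * t) / ω * ∑ j ∈ range n, (-I / ω) ^ j * iteratedDeriv j f 0
        + (-I / ω) ^ n * ∫ s in 0..t, exp (I * ω * (t - s)) * iteratedDeriv n f s := by
  induction n with
  | zero => simp
  | succ n ih =>
    have hderiv (s : ℝ) : HasDerivAt (iteratedDeriv n f) (iteratedDeriv (n + 1) f s) s := by
      rw [iteratedDeriv_succ]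
      exact (hf.differentiable_iteratedDeriv' n s).hasDerivAt
    have hcont : Continuous (iteratedDeriv (n + 1) f) := hf.continuous_iteratedDeriv' (n + 1)
    rw [ih (hf.of_le (by norm_cast; omega)),
      integral_cexp_mul_eq_of_hasDerivAt hω (fun s _ => hderiv s) (hcont.intervalIntegrable 0 t),
      sum_range_succ, sum_range_succ]
    ring

open Complex in
/-- Repeated integration by parts for oscillatory integrals: for `f : ℝ → ℂ` of class
`C^{n+1}` and real `ω ≠ 0`,
`∫₀ᵗ e^{iω(t−t')} f(t') dt' = (i/ω) Σ_{j=0}^{n} (−i/ω)^j f^{(j)}(t)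
  − (i e^{iωt}/ω) Σ_{j=0}^{n} (−i/ω)^j f^{(j)}(0)
  + (−i/ω)^{n+1} ∫₀ᵗ e^{iω(t−t')} f^{(n+1)}(t') dt'`. -/
theorem oscillatory_integration_by_parts
    (n : ℕ) (ω : ℝ) (hω : ω ≠ 0) (f : ℝ → ℂ) (hf : ContDiff ℝ (↑(n + 1) : ℕ∞) f) :
    ∀ t : ℝ,
      (∫ s in (0 : ℝ)..t, Complex.exp (Complex.I * ω * (t - s)) * f s) =
        (Complex.I / ω) *
            ∑ j ∈ Finset.range (n + 1), (-Complex.I / ω) ^ j * iteratedDeriv j f t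
        - (Complex.I * Complex.exp (Complex.I * ω * t) / ω) *
            ∑ j ∈ Finset.range (n + 1), (-Complex.I / ω) ^ j * iteratedDeriv j f 0
        + (-Complex.I / ω) ^ (n + 1) *
            ∫ s in (0 : ℝ)..t, Complex.exp (Complex.I * ω * (t - s)) *
              iteratedDeriv (n + 1) f s :=
  integral_cexp_mul_eq_sum_iteratedDeriv hω (n + 1) hf
end
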